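/- Suppose L satisfies the entropy-information inequality EI(Φ) for a growth function Φ, that sup_{x∈X} M₁(x) < ∞, and that the state space X is infinite. Then Φ grows linearly at infinity: there exists a constant C > 0 such that Φ(r) ≥ C·r for all r > 0. -/

import Mathlib

open Real Filter MeasureTheory Set

/-- `M₁(x) = ∑_{y ≠ x} k(x,y)`. -/
noncomputable def M1fn {X : Type*} (k : X → X → ℝ) (x : X) : ℝ :=
  ∑' y : {y : X // y ≠ x}, k x y

/-- The standing assumptions on the transition rates and the invariant probability
measure: nonnegative off-diagonal rates, summable rows, `k(x,x) = -M₁(x)`,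
a strictly positive probability density and detailed balance. -/
def MarkovSetting {X : Type*} (k : X → X → ℝ) (μ : X → ℝ) : Prop :=
  (∀ x y, x ≠ y → 0 ≤ k x y) ∧
  (∀ x : X, Summable fun y : {y : X // y ≠ x} => k x y) ∧
  (∀ x : X, k x x = -M1fn k x) ∧
  (∀ x, 0 < μ x) ∧ (∑' x, μ x) = 1 ∧
  (∀ x y, μ x * k x y = μ y * k y x)

/-- The entropy `Ent_μ(f)`. -/
noncomputable def entFn {X : Type*} (μ f : X → ℝ) : ℝ :=
  (∑' x, f x * Real.log (f x) * μ x) -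
    (∑' x, f x * μ x) * Real.log (∑' x, f x * μ x)

/-- The Fisher information `I(f) = (1/2) ∑_{x,y} k(x,y)(f(y)-f(x))(log f(y)-log f(x)) μ(x)`. -/
noncomputable def fisherFn {X : Type*} (k : X → X → ℝ) (μ f : X → ℝ) : ℝ :=
  (1/2) * ∑' p : X × X,
    k p.1 p.2 * (f p.2 - f p.1) * (Real.log (f p.2) - Real.log (f p.1)) * μ p.1

/-- Finiteness of the Fisher information. -/
def FisherFinite {X : Type*} (k : X → X → ℝ) (μ f : X → ℝ) : Prop :=
  Summable fun p : X × X =>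
    k p.1 p.2 * (f p.2 - f p.1) * (Real.log (f p.2) - Real.log (f p.1)) * μ p.1

/-- A growth function: strictly increasing, concave, `C¹` and positive on `(0,∞)`. -/
def GrowthFun (Φ : ℝ → ℝ) : Prop :=
  StrictMonoOn Φ (Ioi 0) ∧ ConcaveOn ℝ (Ioi 0) Φ ∧
    ContDiffOn ℝ 1 Φ (Ioi 0) ∧ ∀ r : ℝ, 0 < r → 0 < Φ r

/-- The entropy-information inequality `EI(Φ)`:
`Ent_μ(f) ≤ Φ(I(f))` for all probability densities `f ∈ P_*(X)` with finite entropy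
and finite Fisher information. -/
def EIineq {X : Type*} (k : X → X → ℝ) (μ : X → ℝ) (Φ : ℝ → ℝ) : Prop :=
  ∀ f : X → ℝ, (∀ x, 0 < f x) → (∑' x, f x * μ x) = 1 →
    (Summable fun x => f x * Real.log (f x) * μ x) →
    FisherFinite k μ f →
    entFn μ f ≤ Φ (fisherFn k μ f)

/-!
Test `EI(Φ)` against the density `f` equal to `a = (2π(x₀))⁻¹` at one point `x₀` and to
`b = (2(1 - π(x₀)))⁻¹` elsewhere. Its entropy is at least `(ℓ - 2 log 2)/2` and its Fisher information
is `M₁(x₀) π(x₀)(a - b)(log a - log b) ≤ M₁(x₀) ℓ/2`, where `ℓ = log π(x₀)⁻¹`. Since `X` is infinite,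
`π(x₀)` can be taken arbitrarily small, so `ℓ → ∞`, and with `M₁ ≤ C` monotonicity gives
`Φ(R) ≥ R/(2C)` along a sequence `R → ∞`. Concavity and positivity of `Φ` propagate a linear lower
bound from large arguments down to all of `(0, ∞)`.
-/

section

variable {X : Type*} {k : X → X → ℝ} {μ : X → ℝ}

theorem MarkovSetting.hasSum_one (hMS : MarkovSetting k μ) : HasSum μ 1 := by
  obtain ⟨-, -, -, -, htot, -⟩ := hMS
  have hμ : Summable μ := by
    by_contra h
    rw [tsum_eq_zero_of_not_summable h] at htot
    exact zero_ne_one htot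
  exact htot ▸ hμ.hasSum

theorem MarkovSetting.M1fn_nonneg (hMS : MarkovSetting k μ) (x : X) : 0 ≤ M1fn k x :=
  tsum_nonneg fun y => hMS.1 x y (Ne.symm y.2)

theorem hasSum_ite_fst_eq {α β γ : Type*} [AddCommMonoid α] [TopologicalSpace α] {f : β → α}
    {a : α} (hf : HasSum f a) (x₀ : γ) [DecidablePred (· = x₀)] :
    HasSum (fun p : γ × β => if p.1 = x₀ then f p.2 else 0) a := by
  refine ((Prod.mk_right_injective x₀).hasSum_iff ?_).mp (by simpa [Function.comp_def] using hf)
  rintro ⟨x, y⟩ hp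
  have hx : x ≠ x₀ := fun hx => hp ⟨y, by rw [hx]⟩
  simp [hx]

theorem ConcaveOn.mul_le_two_mul {Φ : ℝ → ℝ} (hΦ : ConcaveOn ℝ (Ioi 0) Φ)
    (hnonneg : ∀ r, 0 < r → 0 ≤ Φ r) {r R : ℝ} (hr : 0 < r) (hrR : r ≤ R) :
    r * Φ R ≤ 2 * R * Φ r := by
  have hΦr := hnonneg r hr
  rcases hrR.eq_or_lt with rfl | hlt
  · nlinarith
  -- the chord through `r/2` and `r` bounds the chord through `r` and `R`
  have hslope := hΦ.slope_anti_adjacent (x := r / 2) (half_pos hr) (hr.trans hlt)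
    (half_lt_self hr) hlt
  rw [div_le_div_iff₀ (by linarith) (by linarith)] at hslope
  nlinarith [hnonneg (r / 2) (half_pos hr)]

section TwoLevel

open Classical

noncomputable def twoLevel (x₀ : X) (a b : ℝ) : X → ℝ := fun x => if x = x₀ then a else b

theorem hasSum_twoLevel_mul (hμ : HasSum μ 1) (x₀ : X) (a b : ℝ) :
    HasSum (fun x => twoLevel x₀ a b x * μ x) (a * μ x₀ + b * (1 - μ x₀)) := by
  have hsplit : (fun x => twoLevel x₀ a b x * μ x) =
      fun x => b * μ x + if x = x₀ then (a - b) * μ x₀ else 0 := by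
    funext x
    by_cases hx : x = x₀
    · simp only [twoLevel, hx, if_true]; ring
    · simp [twoLevel, hx]
  rw [hsplit, show a * μ x₀ + b * (1 - μ x₀) = b * 1 + (a - b) * μ x₀ by ring]
  exact (hμ.mul_left b).add (hasSum_ite_eq x₀ ((a - b) * μ x₀))

theorem hasSum_fisher_twoLevel (hMS : MarkovSetting k μ) (x₀ : X) (a b : ℝ) :
    HasSum (fun p : X × X => k p.1 p.2 * (twoLevel x₀ a b p.2 - twoLevel x₀ a b p.1) *
        (log (twoLevel x₀ a b p.2) - log (twoLevel x₀ a b p.1)) * μ p.1)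
      (2 * ((a - b) * (log a - log b) * μ x₀ * M1fn k x₀)) := by
  obtain ⟨-, hrow, -, -, -, hbalance⟩ := hMS
  set h := {y | y ≠ x₀}.indicator (k x₀)
  have hh : HasSum h (M1fn k x₀) := hasSum_subtype_iff_indicator.mp (hrow x₀).hasSum
  have hfst : HasSum (fun p : X × X => if p.1 = x₀ then h p.2 else 0) (M1fn k x₀) :=
    hasSum_ite_fst_eq hh x₀
  have hsnd : HasSum (fun p : X × X => if p.2 = x₀ then h p.1 else 0) (M1fn k x₀) :=
    (Equiv.prodComm X X).hasSum_iff.mpr hfst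
  have hterm : (fun p : X × X => k p.1 p.2 * (twoLevel x₀ a b p.2 - twoLevel x₀ a b p.1) *
      (log (twoLevel x₀ a b p.2) - log (twoLevel x₀ a b p.1)) * μ p.1) = fun p =>
      (a - b) * (log a - log b) * μ x₀ *
        ((if p.1 = x₀ then h p.2 else 0) + (if p.2 = x₀ then h p.1 else 0)) := by
    funext ⟨x, y⟩
    by_cases hx : x = x₀ <;> by_cases hy : y = x₀
    · simp [twoLevel, h, hx, hy]
    · simp [twoLevel, h, hx, hy]; ring
    · -- detailed balance turns the rate `y → x₀` into the rate `x₀ → y`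
      simp [twoLevel, h, hx, hy]
      linear_combination (log a - log b) * (a - b) * hbalance x x₀
    · simp [twoLevel, hx, hy]
  rw [hterm, show ∀ c M : ℝ, 2 * (c * M) = c * (M + M) from fun c M => by ring]
  exact (hfst.add hsnd).mul_left _

theorem EIineq.twoLevel_bound {Φ : ℝ → ℝ} (hMS : MarkovSetting k μ) (hEI : EIineq k μ Φ)
    {x₀ : X} (hx₀ : μ x₀ ≤ 1 / 2) :
    ∃ I, 0 ≤ I ∧ I ≤ M1fn k x₀ * log (μ x₀)⁻¹ / 2 ∧ (log (μ x₀)⁻¹ - 2 * log 2) / 2 ≤ Φ I := by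
  set π₀ := μ x₀
  have hπ₀ : 0 < π₀ := hMS.2.2.2.1 x₀
  set a := (2 * π₀)⁻¹
  set b := (2 * (1 - π₀))⁻¹
  set f := twoLevel x₀ a b
  have h1π₀ : 0 < 1 - π₀ := by linarith
  have ha : 0 < a := by positivity
  have hb : 0 < b := by positivity
  have hμ := hMS.hasSum_one
  have haπ : a * π₀ = 1 / 2 := by simp only [a]; field_simp
  have hbπ : b * (1 - π₀) = 1 / 2 := by simp only [b]; field_simp
  have hnorm : HasSum (fun x => f x * μ x) 1 := by
    convert hasSum_twoLevel_mul hμ x₀ a b using 1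
    linear_combination -haπ - hbπ
  have hent : HasSum (fun x => f x * log (f x) * μ x) ((log a + log b) / 2) := by
    have hfg : ∀ x, f x * log (f x) = twoLevel x₀ (a * log a) (b * log b) x :=
      fun x => apply_ite (fun t => t * log t) _ _ _
    simp only [hfg]
    convert hasSum_twoLevel_mul hμ x₀ (a * log a) (b * log b) using 1
    linear_combination -log a * haπ - log b * hbπ
  have hfish := hasSum_fisher_twoLevel hMS x₀ a b
  have hEIf := hEI f (fun x => by unfold f twoLevel; split_ifs; exacts [ha, hb]) hnorm.tsum_eq
    hent.summable hfish.summable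
  rw [entFn, hent.tsum_eq, hnorm.tsum_eq, log_one, mul_zero, sub_zero, fisherFn, hfish.tsum_eq,
    one_div, inv_mul_cancel_left₀ two_ne_zero] at hEIf
  have hloga : log a = log π₀⁻¹ - log 2 := by
    simp only [a]; rw [mul_inv, log_mul (by norm_num) (by positivity), log_inv 2]; ring
  have hlogb : -log 2 ≤ log b := by
    rw [← log_inv]; exact log_le_log (by norm_num) (by simp only [b]; gcongr; linarith)
  have hb1 : b ≤ 1 := inv_le_one_of_one_le₀ (by linarith)
  have hba : b ≤ a := hb1.trans (one_le_inv₀ (by positivity) |>.mpr (by linarith))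
  have hlogba : log b ≤ log a := log_le_log (by positivity) hba
  have hM₁ := hMS.M1fn_nonneg x₀
  refine ⟨(a - b) * (log a - log b) * π₀ * M1fn k x₀, ?_, ?_, by linarith⟩
  · have := mul_nonneg (sub_nonneg.mpr hba) (sub_nonneg.mpr hlogba)
    positivity
  · have hD : (a - b) * (log a - log b) ≤ a * log π₀⁻¹ :=
      mul_le_mul (by linarith) (by linarith) (by linarith) ha.le
    calc (a - b) * (log a - log b) * π₀ * M1fn k x₀ ≤ a * log π₀⁻¹ * π₀ * M1fn k x₀ := by gcongr
      _ = M1fn k x₀ * log π₀⁻¹ / 2 := by simp only [a]; field_simp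

end TwoLevel

theorem EIineq.frequently_div_le [Infinite X] {Φ : ℝ → ℝ} (hMS : MarkovSetting k μ)
    (hmono : MonotoneOn Φ (Ioi 0)) (hEI : EIineq k μ Φ) {C : ℝ} (hC : 0 < C)
    (hM1 : ∀ x, M1fn k x ≤ C) : ∃ᶠ R in atTop, R / (2 * C) ≤ Φ R := by
  have hμ0 := hMS.hasSum_one.summable.tendsto_cofinite_zero
  have hℓ : Tendsto (fun x => log (μ x)⁻¹) cofinite atTop :=
    tendsto_log_atTop.comp <| tendsto_inv_nhdsGT_zero.comp <|
      tendsto_nhdsWithin_iff.mpr ⟨hμ0, Eventually.of_forall hMS.2.2.2.1⟩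
  rw [frequently_atTop]
  intro T
  obtain ⟨x₀, hx₀, hℓ₁, hℓ₂, hℓ₃⟩ :=
    ((hμ0.eventually_lt_const (by norm_num : (0 : ℝ) < 1 / 2)).and <|
      (hℓ.eventually_ge_atTop (4 * log 2)).and <| (hℓ.eventually_ge_atTop (2 * T / C)).and <|
        hℓ.eventually_ge_atTop (2 * Φ 0 + 2 * log 2 + 1)).exists
  obtain ⟨I, hI0, hIle, hΦI⟩ := hEI.twoLevel_bound hMS hx₀.le
  set ℓ := log (μ x₀)⁻¹
  have hℓpos : 0 < ℓ := by linarith [log_pos one_lt_two]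
  -- `ℓ` is so large that `I = 0` would contradict `(ℓ - 2 log 2) / 2 ≤ Φ 0`
  have hIpos : 0 < I := hI0.lt_of_ne (by rintro rfl; linarith)
  have hIR : I ≤ C * ℓ / 2 := hIle.trans (by gcongr; exact hM1 x₀)
  refine ⟨C * ℓ / 2, ?_, ?_⟩
  · have := (div_le_iff₀' hC).mp hℓ₂; linarith
  · calc C * ℓ / 2 / (2 * C) = ℓ / 4 := by field_simp; ring
      _ ≤ (ℓ - 2 * log 2) / 2 := by linarith
      _ ≤ Φ I := hΦI
      _ ≤ Φ (C * ℓ / 2) := hmono hIpos (hIpos.trans_le hIR) hIR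

end

theorem stmt_3 {X : Type*} (hX : Infinite X)
    (k : X → X → ℝ) (μ : X → ℝ)
    (hMS : MarkovSetting k μ) (Φ : ℝ → ℝ) (hΦ : GrowthFun Φ)
    (hEI : EIineq k μ Φ) (hM1 : ∃ C : ℝ, ∀ x : X, M1fn k x ≤ C) :
    ∃ C : ℝ, 0 < C ∧ ∀ r : ℝ, 0 < r → C * r ≤ Φ r := by
  obtain ⟨hmono, hconc, -, hpos⟩ := hΦ
  obtain ⟨C₀, hC₀⟩ := hM1
  set C := max C₀ 1
  have hC : 0 < C := lt_max_of_lt_right one_pos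
  have hfreq := hEI.frequently_div_le hMS hmono.monotoneOn hC
    fun x => (hC₀ x).trans (le_max_left _ _)
  refine ⟨1 / (4 * C), by positivity, fun r hr => ?_⟩
  obtain ⟨R, hrR, hR⟩ := frequently_atTop.mp hfreq r
  have hRpos : 0 < R := hr.trans_le hrR
  have hconc_rR := hconc.mul_le_two_mul (fun s hs => (hpos s hs).le) hr hrR
  rw [div_le_iff₀ (by positivity)] at hR
  have hrR' : r * R ≤ 4 * C * Φ r * R := by nlinarith
  rw [one_div, inv_mul_le_iff₀ (by positivity)]
  exact le_of_mul_le_mul_right hrR' hRpos
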